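/- arXiv:0803.0396 — 2 statements merged into one kernel-verified Lean document; each statement's English description precedes it below -/
import Mathlib

section
/- Let μ_n := 1 − 1/n for n ≥ 1, let (φ_n) be positive reals with Σ_n φ_n < ∞, and set φ(τ) := Σ_n φ_n e^{iμ_n τ}. Then for every k ≥ 1 and α > 0, ℱ_α φ(μ_k) = Σ_n φ_n · 2α/(α² + (1/n − 1/k)²) ≥ 2φ_k/α; in particular lim_{α→0} ℱ_α φ(μ_k) = +∞ for every k. -/
open MeasureTheory Filter Set Complex

/-!
Since `Σ φ_n` converges absolutely, the integral can be taken term by term, and the `n`-th term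
is `φ_n` times the Fourier transform of `e^{-α|τ|}` at `μ_n - μ_k`, the Lorentzian
`2α / (α² + (μ_n - μ_k)²)`. All terms are nonnegative and the `n = k` term alone is `2φ_k / α`,
which blows up as `α → 0⁺`.
-/

section FourierTransformExpNegAbs

variable {α : ℝ}

lemma exp_neg_abs_mul_exp_of_nonpos (c : ℝ) {τ : ℝ} (hτ : τ ≤ 0) :
    cexp (-(α : ℂ) * |τ|) * cexp (I * c * τ) = cexp ((α + I * c) * τ) := by
  rw [abs_of_nonpos hτ, ← Complex.exp_add]
  push_cast
  ring_nf

lemma exp_neg_abs_mul_exp_of_pos (c : ℝ) {τ : ℝ} (hτ : 0 < τ) :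
    cexp (-(α : ℂ) * |τ|) * cexp (I * c * τ) = cexp ((-α + I * c) * τ) := by
  rw [abs_of_pos hτ, ← Complex.exp_add]
  ring_nf

lemma norm_exp_neg_abs_mul_exp (c τ : ℝ) :
    ‖cexp (-(α : ℂ) * |τ|) * cexp (I * c * τ)‖ = Real.exp (-α * |τ|) := by
  simp [Complex.norm_exp, Complex.mul_re]

theorem integrable_exp_neg_abs_mul_exp (hα : 0 < α) (c : ℝ) :
    Integrable fun τ : ℝ => cexp (-(α : ℂ) * |τ|) * cexp (I * c * τ) := by
  rw [← integrableOn_univ, ← Iic_union_Ioi (a := 0), integrableOn_union]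
  exact ⟨(integrableOn_exp_mul_complex_Iic (by simpa) 0).congr_fun
      (fun τ hτ => (exp_neg_abs_mul_exp_of_nonpos c hτ).symm) measurableSet_Iic,
    (integrableOn_exp_mul_complex_Ioi (by simpa) 0).congr_fun
      (fun τ hτ => (exp_neg_abs_mul_exp_of_pos c hτ).symm) measurableSet_Ioi⟩

theorem integral_exp_neg_abs_mul_exp (hα : 0 < α) (c : ℝ) :
    ∫ τ : ℝ, cexp (-(α : ℂ) * |τ|) * cexp (I * c * τ)
      = ((2 * α / (α ^ 2 + c ^ 2) : ℝ) : ℂ) := by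
  have h := integrable_exp_neg_abs_mul_exp hα c
  have hα' : (α : ℂ) ≠ 0 := by exact_mod_cast hα.ne'
  have hden : (α : ℂ) ^ 2 + (c : ℂ) ^ 2 ≠ 0 := by
    exact_mod_cast (by positivity : α ^ 2 + c ^ 2 ≠ 0)
  have hplus : (α : ℂ) + I * c ≠ 0 := fun h0 => hα' (by simpa using congrArg re h0)
  have hminus : -(α : ℂ) + I * c ≠ 0 := fun h0 => hα' (by simpa using congrArg re h0)
  rw [← intervalIntegral.integral_Iic_add_Ioi h.integrableOn h.integrableOn,
    setIntegral_congr_fun measurableSet_Iic (fun τ hτ => exp_neg_abs_mul_exp_of_nonpos c hτ),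
    setIntegral_congr_fun measurableSet_Ioi (fun τ hτ => exp_neg_abs_mul_exp_of_pos c hτ),
    integral_exp_mul_complex_Iic (by simpa), integral_exp_mul_complex_Ioi (by simpa)]
  simp only [ofReal_zero, mul_zero, Complex.exp_zero]
  push_cast
  field_simp
  linear_combination (-2 * α * c ^ 2 : ℂ) * I_sq

theorem integral_exp_neg_abs_mul_tsum {ι : Type*} [Countable ι] (hα : 0 < α)
    {a : ι → ℂ} (ha : Summable fun n => ‖a n‖) (ν : ι → ℝ) (lam : ℝ) :
    ∫ τ : ℝ, cexp (-(α : ℂ) * |τ|) * cexp (-I * lam * τ) * ∑' n, a n * cexp (I * ν n * τ)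
      = ∑' n, a n * ((2 * α / (α ^ 2 + (ν n - lam) ^ 2) : ℝ) : ℂ) := by
  have hshift : ∀ τ : ℝ, cexp (-(α : ℂ) * |τ|) * cexp (-I * lam * τ) *
      ∑' n, a n * cexp (I * ν n * τ)
        = ∑' n, a n * (cexp (-(α : ℂ) * |τ|) * cexp (I * ↑(ν n - lam) * τ)) := by
    intro τ
    rw [← tsum_mul_left]
    refine tsum_congr fun n => ?_
    simp only [mul_left_comm _ (a n), mul_assoc, ← Complex.exp_add]
    push_cast
    ring_nf
  have hnorm : ∀ n, ∫ τ : ℝ, ‖a n * (cexp (-(α : ℂ) * |τ|) * cexp (I * ↑(ν n - lam) * τ))‖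
      = ‖a n‖ * ∫ τ : ℝ, Real.exp (-α * |τ|) := by
    intro n
    simp only [norm_mul (a n), norm_exp_neg_abs_mul_exp, integral_const_mul]
  simp_rw [hshift]
  rw [← integral_tsum_of_summable_integral_norm
    (fun n => (integrable_exp_neg_abs_mul_exp hα _).const_mul (a n))
    ((ha.mul_right _).congr fun n => (hnorm n).symm)]
  simp only [integral_const_mul, integral_exp_neg_abs_mul_exp hα]

theorem le_tsum_mul_lorentzian {ι : Type*} {w c : ι → ℝ} (hw : Summable w) (hw0 : ∀ n, 0 ≤ w n)
    (hα : 0 < α) {k : ι} (hck : c k = 0) :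
    2 * w k / α ≤ ∑' n, w n * (2 * α / (α ^ 2 + c n ^ 2)) := by
  have hterm0 : ∀ n, 0 ≤ w n * (2 * α / (α ^ 2 + c n ^ 2)) := fun n => by
    have := hw0 n; positivity
  have hterm_le : ∀ n, w n * (2 * α / (α ^ 2 + c n ^ 2)) ≤ w n * (2 / α) := fun n => by
    refine mul_le_mul_of_nonneg_left ?_ (hw0 n)
    rw [div_le_div_iff₀ (by positivity) hα]
    nlinarith [sq_nonneg (c n)]
  have hk : 2 * w k / α = w k * (2 * α / (α ^ 2 + c k ^ 2)) := by
    rw [hck]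
    field_simp
    ring
  rw [hk]
  exact (hw.mul_right _).of_nonneg_of_le hterm0 hterm_le |>.le_tsum k fun n _ => hterm0 n

end FourierTransformExpNegAbs

/-- Let `μ_n := 1 − 1/n` for `n ≥ 1` (here indexed by
`n : ℕ` via `μ n = 1 − 1/(n+1)`), let `(φ_n)` be positive reals with
`Σ φ_n < ∞`, and set `φ(τ) := Σ_n φ_n e^{iμ_n τ}`.  Then for every `k` and
`α > 0`, `2π ℱ_α φ(μ_k) = Σ_n φ_n · 2α/(α² + (1/n − 1/k)²) ≥ 2φ_k/α`; in
particular `lim_{α→0} ℱ_α φ(μ_k) = +∞` for every `k`. -/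
theorem statement6
    (φc : ℕ → ℝ) (hpos : ∀ n, 0 < φc n) (hsum : Summable φc)
    (μ : ℕ → ℝ) (hμ : ∀ n, μ n = 1 - 1 / (n + 1))
    (φ : ℝ → ℂ) (hφ : ∀ τ, φ τ = ∑' n, (φc n : ℂ) * Complex.exp (Complex.I * μ n * τ))
    (F : ℝ → ℝ → ℂ)
    (hF : ∀ α lam : ℝ, F α lam
      = ((1 / (2 * Real.pi) : ℝ) : ℂ) *
          ∫ τ : ℝ, Complex.exp (-(α : ℂ) * |τ|) * Complex.exp (-Complex.I * lam * τ) * φ τ) :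
    ∀ k : ℕ, ∀ α > (0:ℝ),
      ((2 * Real.pi : ℝ) : ℂ) * F α (μ k)
          = ((∑' n : ℕ, φc n * (2 * α / (α ^ 2 + (1 / (n + 1) - 1 / (k + 1)) ^ 2)) : ℝ) : ℂ) ∧
      2 * φc k / α ≤ ∑' n : ℕ, φc n * (2 * α / (α ^ 2 + (1 / (n + 1) - 1 / (k + 1)) ^ 2)) ∧
      Tendsto (fun α : ℝ => ‖F α (μ k)‖) (nhdsWithin 0 (Set.Ioi 0)) atTop := by
  intro k
  have hπ : 0 < 2 * Real.pi := by positivity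
  have hsq : ∀ n : ℕ, (μ n - μ k) ^ 2 = (1 / ((n : ℝ) + 1) - 1 / ((k : ℝ) + 1)) ^ 2 := fun n => by
    rw [hμ, hμ]; ring
  have hnorm : Summable fun n => ‖(φc n : ℂ)‖ := by
    simpa [Complex.norm_real, abs_of_pos (hpos _)] using hsum
  have hvalue : ∀ α > (0 : ℝ), ((2 * Real.pi : ℝ) : ℂ) * F α (μ k)
      = ((∑' n : ℕ, φc n * (2 * α / (α ^ 2 + (1 / (n + 1) - 1 / (k + 1)) ^ 2)) : ℝ) : ℂ) := by
    intro α hα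
    rw [hF, ← mul_assoc, ← Complex.ofReal_mul, mul_one_div_cancel hπ.ne', Complex.ofReal_one,
      one_mul]
    simp only [hφ, integral_exp_neg_abs_mul_tsum hα hnorm, hsq, Complex.ofReal_tsum,
      Complex.ofReal_mul]
  have hlower : ∀ α > (0 : ℝ),
      2 * φc k / α ≤ ∑' n : ℕ, φc n * (2 * α / (α ^ 2 + (1 / (n + 1) - 1 / (k + 1)) ^ 2)) :=
    fun α hα => le_tsum_mul_lorentzian hsum (fun n => (hpos n).le) hα (sub_self _)
  have hblowup : ∀ α > (0 : ℝ), 2 * φc k / (2 * Real.pi) * α⁻¹ ≤ ‖F α (μ k)‖ := by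
    intro α hα
    have hS := (hlower α hα).trans (le_abs_self _)
    rw [← Real.norm_eq_abs, ← Complex.norm_real, ← hvalue α hα, norm_mul, Complex.norm_real,
      Real.norm_of_nonneg hπ.le] at hS
    rw [div_eq_mul_inv] at hS
    rw [div_mul_eq_mul_div, div_le_iff₀ hπ]
    linarith
  refine fun α hα => ⟨hvalue α hα, hlower α hα, ?_⟩
  exact tendsto_atTop_mono' _ (eventually_nhdsWithin_of_forall hblowup)
    (tendsto_inv_nhdsGT_zero.const_mul_atTop (by have := hpos k; positivity))
end

section
/- Let H := {u ∈ L²(Υ)³ : div u = 0, u₃|_{z=0} = u₃|_{z=a} = 0} with Υ = 𝕋² × (0, a), and let P be the orthogonal projection of L²(Υ)³ onto H. For k ∈ ℤ³∖{0} with k_h ≠ 0, define N_k(x_h, z) := e^{ik_h'·x_h}(cos(k₃'z)n₁(k), cos(k₃'z)n₂(k), sin(k₃'z)n₃(k)) with n₁(k) = (ik₂' + k₁'λ_k)/(√(a₁a₂a)|k_h'|), n₂(k) = (−ik₁' + k₂'λ_k)/(√(a₁a₂a)|k_h'|), n₃(k) = i|k_h'|/(√(a₁a₂a)|k'|), and λ_k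 = −k₃'/|k'|. Then N_k ∈ H, ‖N_k‖_{L²} = 1, and P(e₃ ∧ N_k) = iλ_k N_k. -/
/-!
`N_k` is the plane wave `e^{ik_h'·x_h}` times `(cos, cos, sin)(k₃'z)` times the amplitude vector
`n(k)`. Divergence-freeness is the identity `ik₁'n₁ + ik₂'n₂ + k₃'n₃ = 0`, and `sin(k₃'a) = 0` gives
the boundary condition. As `|e^{ik_h'·x_h}| = 1`, the squared `L²` norm is `a₁a₂` times
`∫₀ᵃ cos²(k₃'z)(|n₁|² + |n₂|²) + sin²(k₃'z)|n₃|²`; the integrand is a constant plus a multiple of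
`k₃' cos(2k₃'z)`, and `k₃' ∫₀ᵃ cos(2k₃'z) dz = sin(2k₃'a) / 2 = 0`.

For the projection, the algebra of `n(k)` gives `e₃ ∧ N_k − iλ_k N_k = ∇φ` with
`φ = |k_h'| / (√(a₁a₂a) |k'|²) · e^{ik_h'·x_h} cos(k₃'z)`, which is periodic in `x_h`. Such a
gradient is `L²`-orthogonal to every smooth periodic divergence-free `u` with `u₃ = 0` on
`z = 0, a`: since `div u = 0`, `ū·∇φ = ∂ₓ(ū₁φ) + ∂ᵧ(ū₂φ) + ∂_z(ū₃φ)`, and each term integrates to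
zero in its own variable.
-/

open Real MeasureTheory ComplexConjugate

open Complex (I)

section IteratedIntegrals

variable {E : Type*} [NormedAddCommGroup E] [NormedSpace ℝ E]

theorem intervalIntegral_swap_of_continuous {f : ℝ → ℝ → E}
    (hf : Continuous fun p : ℝ × ℝ => f p.1 p.2) (a b c d : ℝ) :
    ∫ x in a..b, ∫ y in c..d, f x y = ∫ y in c..d, ∫ x in a..b, f x y :=
  intervalIntegral_intervalIntegral_swap <|
    (hf.continuousOn.integrableOn_compact (isCompact_uIcc.prod isCompact_uIcc)).mono_set
      (Set.prod_mono Set.uIoc_subset_uIcc Set.uIoc_subset_uIcc)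

variable {f g : ℝ → ℝ → ℝ → E} (L₁ L₂ L₃ : ℝ)

theorem integral3_swap_inner (hf : Continuous fun p : ℝ × ℝ × ℝ => f p.1 p.2.1 p.2.2) :
    ∫ x in (0:ℝ)..L₁, ∫ y in (0:ℝ)..L₂, ∫ z in (0:ℝ)..L₃, f x y z
      = ∫ x in (0:ℝ)..L₁, ∫ z in (0:ℝ)..L₃, ∫ y in (0:ℝ)..L₂, f x y z :=
  intervalIntegral.integral_congr fun x _ =>
    intervalIntegral_swap_of_continuous (f := f x) (by fun_prop) _ _ _ _

theorem integral3_swap_outer (hf : Continuous fun p : ℝ × ℝ × ℝ => f p.1 p.2.1 p.2.2) :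
    ∫ x in (0:ℝ)..L₁, ∫ y in (0:ℝ)..L₂, ∫ z in (0:ℝ)..L₃, f x y z
      = ∫ y in (0:ℝ)..L₂, ∫ x in (0:ℝ)..L₁, ∫ z in (0:ℝ)..L₃, f x y z :=
  intervalIntegral_swap_of_continuous (f := fun x y => ∫ z in (0:ℝ)..L₃, f x y z)
    (by fun_prop) _ _ _ _

theorem integral3_add (hf : Continuous fun p : ℝ × ℝ × ℝ => f p.1 p.2.1 p.2.2)
    (hg : Continuous fun p : ℝ × ℝ × ℝ => g p.1 p.2.1 p.2.2) :
    ∫ x in (0:ℝ)..L₁, ∫ y in (0:ℝ)..L₂, ∫ z in (0:ℝ)..L₃, (f x y z + g x y z)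
      = (∫ x in (0:ℝ)..L₁, ∫ y in (0:ℝ)..L₂, ∫ z in (0:ℝ)..L₃, f x y z)
        + ∫ x in (0:ℝ)..L₁, ∫ y in (0:ℝ)..L₂, ∫ z in (0:ℝ)..L₃, g x y z := by
  rw [← intervalIntegral.integral_add (Continuous.intervalIntegrable (by fun_prop) _ _)
    (Continuous.intervalIntegrable (by fun_prop) _ _)]
  refine intervalIntegral.integral_congr fun x _ => ?_
  rw [← intervalIntegral.integral_add (Continuous.intervalIntegrable (by fun_prop) _ _)
    (Continuous.intervalIntegrable (by fun_prop) _ _)]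
  exact intervalIntegral.integral_congr fun y _ => intervalIntegral.integral_add
    (Continuous.intervalIntegrable (by fun_prop) _ _)
    (Continuous.intervalIntegrable (by fun_prop) _ _)

end IteratedIntegrals

section PartialDerivatives

variable {E : Type*} [NormedAddCommGroup E] [NormedSpace ℝ E] {G : ℝ → ℝ → ℝ → E}

theorem ContDiff.comp_swap₂₃ (hG : ContDiff ℝ 1 fun p : ℝ × ℝ × ℝ => G p.1 p.2.1 p.2.2) :
    ContDiff ℝ 1 fun p : ℝ × ℝ × ℝ => G p.1 p.2.2 p.2.1 :=
  hG.comp (by fun_prop : ContDiff ℝ 1 fun p : ℝ × ℝ × ℝ => (p.1, p.2.2, p.2.1))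

theorem ContDiff.comp_rotate₃ (hG : ContDiff ℝ 1 fun p : ℝ × ℝ × ℝ => G p.1 p.2.1 p.2.2) :
    ContDiff ℝ 1 fun p : ℝ × ℝ × ℝ => G p.2.2 p.1 p.2.1 :=
  hG.comp (by fun_prop : ContDiff ℝ 1 fun p : ℝ × ℝ × ℝ => (p.2.2, p.1, p.2.1))

theorem ContDiff.differentiableAt_thd (hG : ContDiff ℝ 1 fun p : ℝ × ℝ × ℝ => G p.1 p.2.1 p.2.2)
    (x y z : ℝ) : DifferentiableAt ℝ (fun t => G x y t) z :=
  (hG.differentiable one_ne_zero _).comp z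
    (by fun_prop : DifferentiableAt ℝ (fun t : ℝ => (x, y, t)) z)

theorem ContDiff.differentiableAt_snd (hG : ContDiff ℝ 1 fun p : ℝ × ℝ × ℝ => G p.1 p.2.1 p.2.2)
    (x y z : ℝ) : DifferentiableAt ℝ (fun t => G x t z) y :=
  ContDiff.differentiableAt_thd (G := fun x z y => G x y z) hG.comp_swap₂₃ x z y

theorem ContDiff.differentiableAt_fst (hG : ContDiff ℝ 1 fun p : ℝ × ℝ × ℝ => G p.1 p.2.1 p.2.2)
    (x y z : ℝ) : DifferentiableAt ℝ (fun t => G t y z) x :=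
  ContDiff.differentiableAt_thd (G := fun y z x => G x y z) hG.comp_rotate₃ y z x

theorem ContDiff.continuous_deriv_thd (hG : ContDiff ℝ 1 fun p : ℝ × ℝ × ℝ => G p.1 p.2.1 p.2.2) :
    Continuous fun p : ℝ × ℝ × ℝ => deriv (fun t => G p.1 p.2.1 t) p.2.2 := by
  have hline (x y z : ℝ) : HasDerivAt (fun t : ℝ => (x, y, t)) ((0, 0, 1) : ℝ × ℝ × ℝ) z :=
    (hasDerivAt_const z x).prodMk ((hasDerivAt_const z y).prodMk (hasDerivAt_id z))
  have hfderiv (p : ℝ × ℝ × ℝ) : deriv (fun t => G p.1 p.2.1 t) p.2.2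
      = fderiv ℝ (fun p : ℝ × ℝ × ℝ => G p.1 p.2.1 p.2.2) p (0, 0, 1) :=
    HasDerivAt.deriv <|
      HasFDerivAt.comp_hasDerivAt (l := fun q : ℝ × ℝ × ℝ => G q.1 q.2.1 q.2.2) p.2.2
        (hG.differentiable one_ne_zero p).hasFDerivAt (hline p.1 p.2.1 p.2.2)
  simp_rw [hfderiv]
  exact (hG.continuous_fderiv_apply one_ne_zero).comp (continuous_id.prodMk continuous_const)

theorem ContDiff.continuous_deriv_snd (hG : ContDiff ℝ 1 fun p : ℝ × ℝ × ℝ => G p.1 p.2.1 p.2.2) :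
    Continuous fun p : ℝ × ℝ × ℝ => deriv (fun t => G p.1 t p.2.2) p.2.1 :=
  (ContDiff.continuous_deriv_thd (G := fun x z y => G x y z) hG.comp_swap₂₃).comp
    (by fun_prop : Continuous fun p : ℝ × ℝ × ℝ => (p.1, p.2.2, p.2.1))

theorem ContDiff.continuous_deriv_fst (hG : ContDiff ℝ 1 fun p : ℝ × ℝ × ℝ => G p.1 p.2.1 p.2.2) :
    Continuous fun p : ℝ × ℝ × ℝ => deriv (fun t => G t p.2.1 p.2.2) p.1 :=
  (ContDiff.continuous_deriv_thd (G := fun y z x => G x y z) hG.comp_rotate₃).comp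
    (by fun_prop : Continuous fun p : ℝ × ℝ × ℝ => (p.2.1, p.2.2, p.1))

variable [CompleteSpace E] (L₁ L₂ L₃ : ℝ)

theorem integral3_deriv_thd_eq_zero (hG : ContDiff ℝ 1 fun p : ℝ × ℝ × ℝ => G p.1 p.2.1 p.2.2)
    (hbd : ∀ x y, G x y L₃ = G x y 0) :
    ∫ x in (0:ℝ)..L₁, ∫ y in (0:ℝ)..L₂, ∫ z in (0:ℝ)..L₃, deriv (fun t => G x y t) z = 0 := by
  have hinner (x y : ℝ) : ∫ z in (0:ℝ)..L₃, deriv (fun t => G x y t) z = 0 := by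
    have hcont : Continuous fun z => deriv (fun t => G x y t) z :=
      hG.continuous_deriv_thd.comp (by fun_prop : Continuous fun z : ℝ => (x, y, z))
    rw [intervalIntegral.integral_deriv_eq_sub (fun z _ => hG.differentiableAt_thd x y z)
      (hcont.intervalIntegrable _ _), hbd, sub_self]
  simp [hinner]

theorem integral3_deriv_snd_eq_zero (hG : ContDiff ℝ 1 fun p : ℝ × ℝ × ℝ => G p.1 p.2.1 p.2.2)
    (hbd : ∀ x z, G x L₂ z = G x 0 z) :
    ∫ x in (0:ℝ)..L₁, ∫ y in (0:ℝ)..L₂, ∫ z in (0:ℝ)..L₃, deriv (fun t => G x t z) y = 0 := by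
  rw [integral3_swap_inner _ _ _ hG.continuous_deriv_snd]
  exact integral3_deriv_thd_eq_zero (G := fun x z y => G x y z) L₁ L₃ L₂ hG.comp_swap₂₃ hbd

theorem integral3_deriv_fst_eq_zero (hG : ContDiff ℝ 1 fun p : ℝ × ℝ × ℝ => G p.1 p.2.1 p.2.2)
    (hbd : ∀ y z, G L₁ y z = G 0 y z) :
    ∫ x in (0:ℝ)..L₁, ∫ y in (0:ℝ)..L₂, ∫ z in (0:ℝ)..L₃, deriv (fun t => G t y z) x = 0 := by
  rw [integral3_swap_outer _ _ _ hG.continuous_deriv_fst,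
    integral3_swap_inner _ _ _ (hG.continuous_deriv_fst.comp
      (by fun_prop : Continuous fun p : ℝ × ℝ × ℝ => (p.2.1, p.1, p.2.2)))]
  exact integral3_deriv_thd_eq_zero (G := fun y z x => G x y z) L₂ L₃ L₁ hG.comp_rotate₃ hbd

end PartialDerivatives

noncomputable def gradient3 {E : Type*} [NormedAddCommGroup E] [NormedSpace ℝ E]
    (φ : ℝ → ℝ → ℝ → E) (x y z : ℝ) : Fin 3 → E :=
  ![deriv (fun t => φ t y z) x, deriv (fun t => φ x t z) y, deriv (fun t => φ x y t) z]

theorem sum_conj_mul_gradient_eq_of_divergence_eq_zero {u : ℝ → ℝ → ℝ → Fin 3 → ℂ}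
    (hu : ∀ j : Fin 3, ContDiff ℝ 1 (fun p : ℝ × ℝ × ℝ => u p.1 p.2.1 p.2.2 j))
    {φ : ℝ → ℝ → ℝ → ℂ} (hφ : ContDiff ℝ 1 fun p : ℝ × ℝ × ℝ => φ p.1 p.2.1 p.2.2) {x y z : ℝ}
    (hdiv : deriv (fun t => u t y z 0) x + deriv (fun t => u x t z 1) y
      + deriv (fun t => u x y t 2) z = 0) :
    ∑ j : Fin 3, conj (u x y z j) * gradient3 φ x y z j
      = deriv (fun t => conj (u t y z 0) * φ t y z) x
        + deriv (fun t => conj (u x t z 1) * φ x t z) y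
        + deriv (fun t => conj (u x y t 2) * φ x y t) z := by
  have hd0 : HasDerivAt (fun t => conj (u t y z 0) * φ t y z)
      (conj (deriv (fun t => u t y z 0) x) * φ x y z
        + conj (u x y z 0) * deriv (fun t => φ t y z) x) x :=
    ((hu 0).differentiableAt_fst (G := fun x y z => u x y z 0) x y z).hasDerivAt.star.mul
      (hφ.differentiableAt_fst x y z).hasDerivAt
  have hd1 : HasDerivAt (fun t => conj (u x t z 1) * φ x t z)
      (conj (deriv (fun t => u x t z 1) y) * φ x y z
        + conj (u x y z 1) * deriv (fun t => φ x t z) y) y :=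
    ((hu 1).differentiableAt_snd (G := fun x y z => u x y z 1) x y z).hasDerivAt.star.mul
      (hφ.differentiableAt_snd x y z).hasDerivAt
  have hd2 : HasDerivAt (fun t => conj (u x y t 2) * φ x y t)
      (conj (deriv (fun t => u x y t 2) z) * φ x y z
        + conj (u x y z 2) * deriv (fun t => φ x y t) z) z :=
    ((hu 2).differentiableAt_thd (G := fun x y z => u x y z 2) x y z).hasDerivAt.star.mul
      (hφ.differentiableAt_thd x y z).hasDerivAt
  have hdiv_conj := congrArg conj hdiv
  simp only [map_add, map_zero] at hdiv_conj
  rw [hd0.deriv, hd1.deriv, hd2.deriv, Fin.sum_univ_three]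
  simp only [gradient3, Matrix.cons_val_zero, Matrix.cons_val_one, Matrix.cons_val_two,
    Matrix.head_cons, Matrix.tail_cons]
  linear_combination -φ x y z * hdiv_conj

theorem integral3_conj_mul_gradient_eq_zero (L₁ L₂ L₃ : ℝ) (u : ℝ → ℝ → ℝ → Fin 3 → ℂ)
    (hu : ∀ j : Fin 3, ContDiff ℝ 1 (fun p : ℝ × ℝ × ℝ => u p.1 p.2.1 p.2.2 j))
    (hux : ∀ x y z : ℝ, u (x + L₁) y z = u x y z) (huy : ∀ x y z : ℝ, u x (y + L₂) z = u x y z)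
    (hdiv : ∀ x y z : ℝ,
      deriv (fun t => u t y z 0) x + deriv (fun t => u x t z 1) y
        + deriv (fun t => u x y t 2) z = 0)
    (hbc : ∀ x y : ℝ, u x y 0 2 = 0 ∧ u x y L₃ 2 = 0)
    (φ : ℝ → ℝ → ℝ → ℂ) (hφ : ContDiff ℝ 1 fun p : ℝ × ℝ × ℝ => φ p.1 p.2.1 p.2.2)
    (hφx : ∀ x y z : ℝ, φ (x + L₁) y z = φ x y z) (hφy : ∀ x y z : ℝ, φ x (y + L₂) z = φ x y z) :
    ∫ x in (0:ℝ)..L₁, ∫ y in (0:ℝ)..L₂, ∫ z in (0:ℝ)..L₃,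
      ∑ j : Fin 3, conj (u x y z j) * gradient3 φ x y z j = 0 := by
  set G : Fin 3 → ℝ → ℝ → ℝ → ℂ := fun j x y z => conj (u x y z j) * φ x y z with hGdef
  have hG (j : Fin 3) : ContDiff ℝ 1 fun p : ℝ × ℝ × ℝ => G j p.1 p.2.1 p.2.2 :=
    (Complex.conjCLE.contDiff.comp (hu j)).mul hφ
  simp_rw [sum_conj_mul_gradient_eq_of_divergence_eq_zero hu hφ (hdiv _ _ _)]
  rw [integral3_add _ _ _ ((hG 0).continuous_deriv_fst.add (hG 1).continuous_deriv_snd)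
      (hG 2).continuous_deriv_thd,
    integral3_add _ _ _ (hG 0).continuous_deriv_fst (hG 1).continuous_deriv_snd,
    integral3_deriv_fst_eq_zero _ _ _ (hG 0) (fun y z => by simp [hGdef, ← hux 0 y z, ← hφx 0 y z]),
    integral3_deriv_snd_eq_zero _ _ _ (hG 1) (fun x z => by simp [hGdef, ← huy x 0 z, ← hφy x 0 z]),
    integral3_deriv_thd_eq_zero _ _ _ (hG 2) (fun x y => by simp [hGdef, (hbc x y).1, (hbc x y).2])]
  simp

theorem integral_cos_sq_mul_add_sin_sq_mul {c a A B M : ℝ} (hs : Real.sin (c * a) = 0)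
    (hAB : A - B = c * M) :
    ∫ z in (0:ℝ)..a, (Real.cos (c * z) ^ 2 * A + Real.sin (c * z) ^ 2 * B) = a * (A + B) / 2 := by
  have hcos : c * ∫ z in (0:ℝ)..a, Real.cos (2 * c * z) = 0 := by
    have h :=
      intervalIntegral.mul_integral_comp_mul_left (f := Real.cos) (c := 2 * c) (a := 0) (b := a)
    rw [integral_cos, mul_zero, Real.sin_zero, sub_zero, show 2 * c * a = 2 * (c * a) by ring,
      Real.sin_two_mul, hs] at h
    linear_combination h / 2
  have hpt (z : ℝ) : Real.cos (c * z) ^ 2 * A + Real.sin (c * z) ^ 2 * B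
      = (A + B) / 2 + M / 2 * (c * Real.cos (2 * c * z)) := by
    rw [Real.sin_sq, Real.cos_sq (c * z), show 2 * c * z = 2 * (c * z) by ring]
    linear_combination Real.cos (2 * (c * z)) / 2 * hAB
  simp_rw [hpt]
  rw [intervalIntegral.integral_add intervalIntegrable_const
      (Continuous.intervalIntegrable (by fun_prop) _ _), intervalIntegral.integral_const,
    intervalIntegral.integral_const_mul, intervalIntegral.integral_const_mul, hcos]
  simp only [smul_eq_mul, sub_zero, mul_zero, add_zero]
  ring

section PlaneWave

noncomputable def planeWave (k1 k2 x y : ℝ) : ℂ := Complex.exp (I * ((k1 * x + k2 * y : ℝ) : ℂ))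

variable (k1 k2 : ℝ)

theorem hasDerivAt_planeWave_fst (x y : ℝ) :
    HasDerivAt (fun t => planeWave k1 k2 t y) (I * k1 * planeWave k1 k2 x y) x := by
  have h : HasDerivAt (fun t : ℝ => k1 * t + k2 * y) k1 x := by
    simpa using ((hasDerivAt_id x).const_mul k1).add_const (k2 * y)
  refine (h.ofReal_comp.const_mul I).cexp.congr_deriv ?_
  rw [planeWave]
  ring

theorem hasDerivAt_planeWave_snd (x y : ℝ) :
    HasDerivAt (fun t => planeWave k1 k2 x t) (I * k2 * planeWave k1 k2 x y) y := by
  have h : HasDerivAt (fun t : ℝ => k1 * x + k2 * t) k2 y := by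
    simpa using ((hasDerivAt_id y).const_mul k2).const_add (k1 * x)
  refine (h.ofReal_comp.const_mul I).cexp.congr_deriv ?_
  rw [planeWave]
  ring

theorem norm_planeWave (x y : ℝ) : ‖planeWave k1 k2 x y‖ = 1 := by
  simp [planeWave, Complex.norm_exp]

theorem planeWave_add_fst {L : ℝ} {m : ℤ} (h : k1 * L = 2 * π * m) (x y : ℝ) :
    planeWave k1 k2 (x + L) y = planeWave k1 k2 x y := by
  rw [planeWave, planeWave, show k1 * (x + L) + k2 * y = k1 * x + k2 * y + m * (2 * π) by
    linear_combination h]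
  push_cast
  rw [mul_add, Complex.exp_add, show I * (m * (2 * π)) = m * (2 * π * I) by ring,
    Complex.exp_int_mul_two_pi_mul_I, mul_one]

theorem planeWave_add_snd {L : ℝ} {m : ℤ} (h : k2 * L = 2 * π * m) (x y : ℝ) :
    planeWave k1 k2 x (y + L) = planeWave k1 k2 x y := by
  simpa only [planeWave, add_comm (k1 * _)] using planeWave_add_fst k2 k1 h y x

theorem contDiff_planeWave : ContDiff ℝ 1 fun p : ℝ × ℝ => planeWave k1 k2 p.1 p.2 := by
  unfold planeWave
  exact (contDiff_const.mul (Complex.ofRealCLM.contDiff.comp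
    (by fun_prop : ContDiff ℝ 1 fun p : ℝ × ℝ => k1 * p.1 + k2 * p.2))).cexp

end PlaneWave

section ModeField

noncomputable def modeField (k1 k2 k3 : ℝ) (n1 n2 n3 : ℂ) (x y z : ℝ) : Fin 3 → ℂ :=
  ![planeWave k1 k2 x y * ((Real.cos (k3 * z) : ℝ) : ℂ) * n1,
    planeWave k1 k2 x y * ((Real.cos (k3 * z) : ℝ) : ℂ) * n2,
    planeWave k1 k2 x y * ((Real.sin (k3 * z) : ℝ) : ℂ) * n3]

variable {k1 k2 k3 : ℝ} {n1 n2 n3 : ℂ}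

theorem hasDerivAt_ofReal_cos_mul (k z : ℝ) :
    HasDerivAt (fun t : ℝ => ((Real.cos (k * t) : ℝ) : ℂ)) (-(k * Real.sin (k * z) : ℝ)) z := by
  refine (((hasDerivAt_id z).const_mul k).cos.ofReal_comp).congr_deriv ?_
  push_cast [id]
  ring

theorem hasDerivAt_ofReal_sin_mul (k z : ℝ) :
    HasDerivAt (fun t : ℝ => ((Real.sin (k * t) : ℝ) : ℂ)) (k * Real.cos (k * z) : ℝ) z := by
  refine (((hasDerivAt_id z).const_mul k).sin.ofReal_comp).congr_deriv ?_
  push_cast [id]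
  ring

theorem modeField_divergence (h : I * k1 * n1 + I * k2 * n2 + k3 * n3 = 0) (x y z : ℝ) :
    deriv (fun t => modeField k1 k2 k3 n1 n2 n3 t y z 0) x
      + deriv (fun t => modeField k1 k2 k3 n1 n2 n3 x t z 1) y
      + deriv (fun t => modeField k1 k2 k3 n1 n2 n3 x y t 2) z = 0 := by
  simp only [modeField, Matrix.cons_val_zero, Matrix.cons_val_one, Matrix.cons_val_two,
    Matrix.head_cons, Matrix.tail_cons]
  rw [(((hasDerivAt_planeWave_fst k1 k2 x y).mul_const _).mul_const n1).deriv,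
    (((hasDerivAt_planeWave_snd k1 k2 x y).mul_const _).mul_const n2).deriv,
    (((hasDerivAt_ofReal_sin_mul k3 z).const_mul (planeWave k1 k2 x y)).mul_const n3).deriv]
  push_cast
  linear_combination planeWave k1 k2 x y * Complex.cos (k3 * z) * h

theorem modeField_vertical_eq_zero {a : ℝ} (h : Real.sin (k3 * a) = 0) (x y : ℝ) :
    modeField k1 k2 k3 n1 n2 n3 x y 0 2 = 0 ∧ modeField k1 k2 k3 n1 n2 n3 x y a 2 = 0 := by
  simp [modeField, h]

theorem integral3_normSq_modeField (L₁ L₂ L₃ : ℝ) :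
    ∫ x in (0:ℝ)..L₁, ∫ y in (0:ℝ)..L₂, ∫ z in (0:ℝ)..L₃,
        (‖modeField k1 k2 k3 n1 n2 n3 x y z 0‖ ^ 2 + ‖modeField k1 k2 k3 n1 n2 n3 x y z 1‖ ^ 2
          + ‖modeField k1 k2 k3 n1 n2 n3 x y z 2‖ ^ 2)
      = L₁ * L₂ * ∫ z in (0:ℝ)..L₃,
          (Real.cos (k3 * z) ^ 2 * (‖n1‖ ^ 2 + ‖n2‖ ^ 2) + Real.sin (k3 * z) ^ 2 * ‖n3‖ ^ 2) := by
  have h (x y z : ℝ) : ‖modeField k1 k2 k3 n1 n2 n3 x y z 0‖ ^ 2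
      + ‖modeField k1 k2 k3 n1 n2 n3 x y z 1‖ ^ 2 + ‖modeField k1 k2 k3 n1 n2 n3 x y z 2‖ ^ 2
      = Real.cos (k3 * z) ^ 2 * (‖n1‖ ^ 2 + ‖n2‖ ^ 2) + Real.sin (k3 * z) ^ 2 * ‖n3‖ ^ 2 := by
    simp only [modeField, Matrix.cons_val_zero, Matrix.cons_val_one, Matrix.cons_val_two,
      Matrix.head_cons, Matrix.tail_cons, norm_mul, norm_planeWave, Complex.norm_real,
      Real.norm_eq_abs, mul_pow, sq_abs]
    ring
  simp only [h, intervalIntegral.integral_const, smul_eq_mul, sub_zero]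
  ring

noncomputable def modePotential (k1 k2 k3 C x y z : ℝ) : ℂ :=
  C * planeWave k1 k2 x y * ((Real.cos (k3 * z) : ℝ) : ℂ)

theorem contDiff_modePotential (C : ℝ) :
    ContDiff ℝ 1 fun p : ℝ × ℝ × ℝ => modePotential k1 k2 k3 C p.1 p.2.1 p.2.2 :=
  (contDiff_const.mul ((contDiff_planeWave k1 k2).comp
    (by fun_prop : ContDiff ℝ 1 fun p : ℝ × ℝ × ℝ => (p.1, p.2.1)))).mul
    (Complex.ofRealCLM.contDiff.comp
      (by fun_prop : ContDiff ℝ 1 fun p : ℝ × ℝ × ℝ => Real.cos (k3 * p.2.2)))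

theorem modePotential_add_fst {C L : ℝ} {m : ℤ} (h : k1 * L = 2 * π * m) (x y z : ℝ) :
    modePotential k1 k2 k3 C (x + L) y z = modePotential k1 k2 k3 C x y z := by
  rw [modePotential, modePotential, planeWave_add_fst k1 k2 h]

theorem modePotential_add_snd {C L : ℝ} {m : ℤ} (h : k2 * L = 2 * π * m) (x y z : ℝ) :
    modePotential k1 k2 k3 C x (y + L) z = modePotential k1 k2 k3 C x y z := by
  rw [modePotential, modePotential, planeWave_add_snd k1 k2 h]

theorem modeField_coriolis {lam C : ℝ} (h1 : -n2 - I * lam * n1 = I * k1 * C)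
    (h2 : n1 - I * lam * n2 = I * k2 * C) (h3 : I * lam * n3 = k3 * C) (x y z : ℝ) (j : Fin 3) :
    (![-(modeField k1 k2 k3 n1 n2 n3 x y z 1), modeField k1 k2 k3 n1 n2 n3 x y z 0, 0] : Fin 3 → ℂ)
        j
        - I * lam * modeField k1 k2 k3 n1 n2 n3 x y z j
      = gradient3 (modePotential k1 k2 k3 C) x y z j := by
  simp only [gradient3, modePotential]
  rw [(((hasDerivAt_planeWave_fst k1 k2 x y).const_mul (C : ℂ)).mul_const _).deriv,
    (((hasDerivAt_planeWave_snd k1 k2 x y).const_mul (C : ℂ)).mul_const _).deriv,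
    ((hasDerivAt_ofReal_cos_mul k3 z).const_mul (C * planeWave k1 k2 x y)).deriv]
  fin_cases j <;> simp only [modeField, Complex.ofReal_cos, Complex.ofReal_mul, Complex.ofReal_sin,
    Fin.isValue, Matrix.cons_val_one, Matrix.cons_val_zero, Fin.zero_eta, Fin.mk_one,
    Fin.reduceFinMk, Matrix.cons_val, zero_sub, mul_neg, neg_inj]
  · linear_combination planeWave k1 k2 x y * Complex.cos (k3 * z) * h1
  · linear_combination planeWave k1 k2 x y * Complex.cos (k3 * z) * h2
  · linear_combination planeWave k1 k2 x y * Complex.sin (k3 * z) * h3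

end ModeField

section Amplitude

variable {k1 k2 k3 s K κ lam : ℝ} {n1 n2 n3 : ℂ}

theorem amplitude_divergence (hK : K ≠ 0) (hκ : κ ≠ 0) (hK2 : K ^ 2 = k1 ^ 2 + k2 ^ 2)
    (hlam : lam = -k3 / κ)
    (hn1 : n1 = (I * k2 + ((k1 * lam : ℝ) : ℂ)) / ((s * K : ℝ) : ℂ))
    (hn2 : n2 = (-I * k1 + ((k2 * lam : ℝ) : ℂ)) / ((s * K : ℝ) : ℂ))
    (hn3 : n3 = I * ((K : ℝ) : ℂ) / ((s * κ : ℝ) : ℂ)) :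
    I * k1 * n1 + I * k2 * n2 + k3 * n3 = 0 := by
  subst hn1 hn2 hn3 hlam
  have hK2' : (K : ℂ) ^ 2 = k1 ^ 2 + k2 ^ 2 := by exact_mod_cast hK2
  have : (K : ℂ) ≠ 0 := by exact_mod_cast hK
  have : (κ : ℂ) ≠ 0 := by exact_mod_cast hκ
  push_cast
  field_simp
  rw [mul_zero, div_eq_zero_iff]
  left
  linear_combination I * k3 * hK2'

theorem amplitude_coriolis_fst (hK : K ≠ 0) (hκ : κ ≠ 0) (hK2 : K ^ 2 = k1 ^ 2 + k2 ^ 2)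
    (hκ2 : κ ^ 2 = k1 ^ 2 + k2 ^ 2 + k3 ^ 2) (hlam : lam = -k3 / κ)
    (hn1 : n1 = (I * k2 + ((k1 * lam : ℝ) : ℂ)) / ((s * K : ℝ) : ℂ))
    (hn2 : n2 = (-I * k1 + ((k2 * lam : ℝ) : ℂ)) / ((s * K : ℝ) : ℂ)) :
    -n2 - I * lam * n1 = I * k1 * ((K / (κ ^ 2 * s) : ℝ) : ℂ) := by
  subst hn1 hn2 hlam
  have hK2' : (K : ℂ) ^ 2 = k1 ^ 2 + k2 ^ 2 := by exact_mod_cast hK2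
  have hκ2' : (κ : ℂ) ^ 2 = k1 ^ 2 + k2 ^ 2 + k3 ^ 2 := by exact_mod_cast hκ2
  have : (K : ℂ) ≠ 0 := by exact_mod_cast hK
  have : (κ : ℂ) ≠ 0 := by exact_mod_cast hκ
  push_cast
  field_simp
  congr 1
  linear_combination I * k1 * (hκ2' - hK2') + k2 * k3 * κ * Complex.I_sq

theorem amplitude_coriolis_snd (hK : K ≠ 0) (hκ : κ ≠ 0) (hK2 : K ^ 2 = k1 ^ 2 + k2 ^ 2)
    (hκ2 : κ ^ 2 = k1 ^ 2 + k2 ^ 2 + k3 ^ 2) (hlam : lam = -k3 / κ)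
    (hn1 : n1 = (I * k2 + ((k1 * lam : ℝ) : ℂ)) / ((s * K : ℝ) : ℂ))
    (hn2 : n2 = (-I * k1 + ((k2 * lam : ℝ) : ℂ)) / ((s * K : ℝ) : ℂ)) :
    n1 - I * lam * n2 = I * k2 * ((K / (κ ^ 2 * s) : ℝ) : ℂ) := by
  subst hn1 hn2 hlam
  have hK2' : (K : ℂ) ^ 2 = k1 ^ 2 + k2 ^ 2 := by exact_mod_cast hK2
  have hκ2' : (κ : ℂ) ^ 2 = k1 ^ 2 + k2 ^ 2 + k3 ^ 2 := by exact_mod_cast hκ2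
  have : (K : ℂ) ≠ 0 := by exact_mod_cast hK
  have : (κ : ℂ) ≠ 0 := by exact_mod_cast hκ
  push_cast
  field_simp
  congr 1
  linear_combination I * k2 * (hκ2' - hK2') - k1 * k3 * κ * Complex.I_sq

theorem amplitude_coriolis_thd (hκ : κ ≠ 0) (hlam : lam = -k3 / κ)
    (hn3 : n3 = I * ((K : ℝ) : ℂ) / ((s * κ : ℝ) : ℂ)) :
    I * lam * n3 = k3 * ((K / (κ ^ 2 * s) : ℝ) : ℂ) := by
  subst hn3 hlam
  have : (κ : ℂ) ≠ 0 := by exact_mod_cast hκ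
  push_cast
  field_simp
  linear_combination (-k3 * K / s : ℂ) * Complex.I_sq

theorem amplitude_normSq_horizontal
    (hn1 : n1 = (I * k2 + ((k1 * lam : ℝ) : ℂ)) / ((s * K : ℝ) : ℂ))
    (hn2 : n2 = (-I * k1 + ((k2 * lam : ℝ) : ℂ)) / ((s * K : ℝ) : ℂ)) :
    ‖n1‖ ^ 2 + ‖n2‖ ^ 2 = (k1 ^ 2 + k2 ^ 2) * (1 + lam ^ 2) / (s * K) ^ 2 := by
  subst hn1 hn2
  simp only [norm_div, div_pow, Complex.norm_real, Real.norm_eq_abs, sq_abs, Complex.sq_norm,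
    Complex.normSq_apply, Complex.add_re, Complex.add_im, Complex.mul_re, Complex.mul_im,
    Complex.neg_re, Complex.neg_im, Complex.I_re, Complex.I_im, Complex.ofReal_re,
    Complex.ofReal_im]
  ring

theorem amplitude_normSq_vertical (hn3 : n3 = I * ((K : ℝ) : ℂ) / ((s * κ : ℝ) : ℂ)) :
    ‖n3‖ ^ 2 = K ^ 2 / (s * κ) ^ 2 := by
  rw [hn3, norm_div, norm_mul, Complex.norm_I, one_mul, Complex.norm_real, Complex.norm_real,
    Real.norm_eq_abs, Real.norm_eq_abs, div_pow, sq_abs, sq_abs]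

theorem amplitude_normSq_add (hs : s ≠ 0) (hK : K ≠ 0) (hκ : κ ≠ 0)
    (hK2 : K ^ 2 = k1 ^ 2 + k2 ^ 2) (hκ2 : κ ^ 2 = k1 ^ 2 + k2 ^ 2 + k3 ^ 2) (hlam : lam = -k3 / κ)
    (hn1 : n1 = (I * k2 + ((k1 * lam : ℝ) : ℂ)) / ((s * K : ℝ) : ℂ))
    (hn2 : n2 = (-I * k1 + ((k2 * lam : ℝ) : ℂ)) / ((s * K : ℝ) : ℂ))
    (hn3 : n3 = I * ((K : ℝ) : ℂ) / ((s * κ : ℝ) : ℂ)) :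
    ‖n1‖ ^ 2 + ‖n2‖ ^ 2 + ‖n3‖ ^ 2 = 2 / s ^ 2 := by
  rw [amplitude_normSq_horizontal hn1 hn2, amplitude_normSq_vertical hn3, hlam, ← hK2]
  field_simp
  linear_combination hK2 - hκ2

theorem amplitude_normSq_sub (hs : s ≠ 0) (hK : K ≠ 0) (hκ : κ ≠ 0)
    (hK2 : K ^ 2 = k1 ^ 2 + k2 ^ 2) (hκ2 : κ ^ 2 = k1 ^ 2 + k2 ^ 2 + k3 ^ 2) (hlam : lam = -k3 / κ)
    (hn1 : n1 = (I * k2 + ((k1 * lam : ℝ) : ℂ)) / ((s * K : ℝ) : ℂ))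
    (hn2 : n2 = (-I * k1 + ((k2 * lam : ℝ) : ℂ)) / ((s * K : ℝ) : ℂ))
    (hn3 : n3 = I * ((K : ℝ) : ℂ) / ((s * κ : ℝ) : ℂ)) :
    ‖n1‖ ^ 2 + ‖n2‖ ^ 2 - ‖n3‖ ^ 2 = k3 * (2 * k3 / (κ ^ 2 * s ^ 2)) := by
  rw [amplitude_normSq_horizontal hn1 hn2, amplitude_normSq_vertical hn3, hlam, ← hK2]
  field_simp
  linear_combination hκ2 - hK2

end Amplitude

/-- Let `H := {u ∈ L²(Υ)³ : div u = 0, u₃|_{z=0} = u₃|_{z=a} = 0}`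
with `Υ = 𝕋² × (0,a)`, and let `P` be the orthogonal projection of `L²(Υ)³`
onto `H`.  For `k ∈ ℤ³∖{0}` with `k_h ≠ 0`, the explicit eigenfunction `N_k`
belongs to `H`, has unit `L²` norm, and satisfies `P(e₃ ∧ N_k) = iλ_k N_k`.
Membership in `H` is expressed by pointwise divergence-freeness and vanishing
of the vertical component at `z = 0, a`; the projection identity is expressed
by orthogonality of `e₃ ∧ N_k − iλ_k N_k` to every (smooth, periodic,
divergence-free, no-vertical-flux) element of `H`. -/
theorem statement17
    (a₁ a₂ a : ℝ) (ha₁ : 0 < a₁) (ha₂ : 0 < a₂) (ha : 0 < a)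
    (k₁ k₂ k₃ : ℤ) (hkh : ¬(k₁ = 0 ∧ k₂ = 0))
    (k1' k2' k3' nk nkh lamk : ℝ)
    (h1 : k1' = 2 * π * k₁ / a₁) (h2 : k2' = 2 * π * k₂ / a₂) (h3 : k3' = π * k₃ / a)
    (hnk : nk = Real.sqrt (k1' ^ 2 + k2' ^ 2 + k3' ^ 2))
    (hnkh : nkh = Real.sqrt (k1' ^ 2 + k2' ^ 2))
    (hlam : lamk = -k3' / nk)
    (n1 n2 n3 : ℂ)
    (hn1 : n1 = (Complex.I * (k2' : ℂ) + ((k1' * lamk : ℝ) : ℂ))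
        / ((Real.sqrt (a₁ * a₂ * a) * nkh : ℝ) : ℂ))
    (hn2 : n2 = (-Complex.I * (k1' : ℂ) + ((k2' * lamk : ℝ) : ℂ))
        / ((Real.sqrt (a₁ * a₂ * a) * nkh : ℝ) : ℂ))
    (hn3 : n3 = Complex.I * ((nkh : ℝ) : ℂ) / ((Real.sqrt (a₁ * a₂ * a) * nk : ℝ) : ℂ))
    (N : ℝ → ℝ → ℝ → Fin 3 → ℂ)
    (hN : ∀ x y z : ℝ, N x y z =
      ![Complex.exp (Complex.I * ((k1' * x + k2' * y : ℝ) : ℂ)) * ((Real.cos (k3' * z) : ℝ) : ℂ) * n1,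
        Complex.exp (Complex.I * ((k1' * x + k2' * y : ℝ) : ℂ)) * ((Real.cos (k3' * z) : ℝ) : ℂ) * n2,
        Complex.exp (Complex.I * ((k1' * x + k2' * y : ℝ) : ℂ)) * ((Real.sin (k3' * z) : ℝ) : ℂ) * n3]) :
    -- (1) N_k is divergence free,
    (∀ x y z : ℝ,
        deriv (fun x' => N x' y z 0) x + deriv (fun y' => N x y' z 1) y
          + deriv (fun z' => N x y z' 2) z = 0) ∧
    -- (2) the vertical component of N_k vanishes at z = 0 and z = a,
    (∀ x y : ℝ, N x y 0 2 = 0 ∧ N x y a 2 = 0) ∧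
    -- (3) N_k has unit L² norm on Υ = 𝕋² × (0,a),
    (∫ x in (0:ℝ)..a₁, ∫ y in (0:ℝ)..a₂, ∫ z in (0:ℝ)..a,
        (‖N x y z 0‖ ^ 2 + ‖N x y z 1‖ ^ 2 + ‖N x y z 2‖ ^ 2) = 1) ∧
    -- (4) P(e₃ ∧ N_k) = iλ_k N_k : the field e₃ ∧ N_k − iλ_k N_k is
    -- orthogonal to every element of H.
    (∀ u : ℝ → ℝ → ℝ → Fin 3 → ℂ,
      (∀ j : Fin 3, ContDiff ℝ 1 (fun p : ℝ × ℝ × ℝ => u p.1 p.2.1 p.2.2 j)) →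
      (∀ x y z : ℝ, u (x + a₁) y z = u x y z) →
      (∀ x y z : ℝ, u x (y + a₂) z = u x y z) →
      (∀ x y z : ℝ,
          deriv (fun x' => u x' y z 0) x + deriv (fun y' => u x y' z 1) y
            + deriv (fun z' => u x y z' 2) z = 0) →
      (∀ x y : ℝ, u x y 0 2 = 0 ∧ u x y a 2 = 0) →
      ∫ x in (0:ℝ)..a₁, ∫ y in (0:ℝ)..a₂, ∫ z in (0:ℝ)..a,
          ∑ j : Fin 3,
            (starRingEnd ℂ) (u x y z j) *
              ((![-(N x y z 1), N x y z 0, 0] : Fin 3 → ℂ) j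
                - Complex.I * ((lamk : ℝ) : ℂ) * N x y z j) = 0) := by
  obtain rfl : N = modeField k1' k2' k3' n1 n2 n3 := funext fun x => funext fun y => funext (hN x y)
  have hs : √(a₁ * a₂ * a) ≠ 0 := (Real.sqrt_pos.2 (by positivity)).ne'
  have hkh' : 0 < k1' ^ 2 + k2' ^ 2 := by
    have : k1' ≠ 0 ∨ k2' ≠ 0 := by
      simpa [h1, h2, ha₁.ne', ha₂.ne', pi_ne_zero, or_iff_not_imp_left] using hkh
    rcases this with h | h <;> positivity
  have hK : nkh ≠ 0 := hnkh ▸ Real.sqrt_ne_zero'.2 hkh'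
  have hκ : nk ≠ 0 := hnk ▸ Real.sqrt_ne_zero'.2 (by positivity)
  have hK2 : nkh ^ 2 = k1' ^ 2 + k2' ^ 2 := hnkh ▸ Real.sq_sqrt hkh'.le
  have hκ2 : nk ^ 2 = k1' ^ 2 + k2' ^ 2 + k3' ^ 2 := hnk ▸ Real.sq_sqrt (by positivity)
  have hsin : Real.sin (k3' * a) = 0 := by
    rw [h3, div_mul_cancel₀ _ ha.ne', mul_comm]
    exact Real.sin_int_mul_pi k₃
  refine ⟨modeField_divergence (amplitude_divergence hK hκ hK2 hlam hn1 hn2 hn3),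
    modeField_vertical_eq_zero hsin, ?_, fun u hu hux huy hdiv hbc => ?_⟩
  · rw [integral3_normSq_modeField, integral_cos_sq_mul_add_sin_sq_mul hsin
      (amplitude_normSq_sub hs hK hκ hK2 hκ2 hlam hn1 hn2 hn3),
      amplitude_normSq_add hs hK hκ hK2 hκ2 hlam hn1 hn2 hn3, Real.sq_sqrt (by positivity)]
    field_simp
  · simp_rw [modeField_coriolis (amplitude_coriolis_fst hK hκ hK2 hκ2 hlam hn1 hn2)
      (amplitude_coriolis_snd hK hκ hK2 hκ2 hlam hn1 hn2) (amplitude_coriolis_thd hκ hlam hn3)]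
    exact integral3_conj_mul_gradient_eq_zero a₁ a₂ a u hu hux huy hdiv hbc _
      (contDiff_modePotential _) (modePotential_add_fst (by rw [h1, div_mul_cancel₀ _ ha₁.ne']))
      (modePotential_add_snd (by rw [h2, div_mul_cancel₀ _ ha₂.ne']))
end
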